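/- Let J be an n×n real symmetric PSD matrix of rank r and V ∈ ℝ^{n×r} with orthonormal columns such that Vᵀ J V is invertible. Then trace(V (Vᵀ J V)⁻¹ Vᵀ) ≥ trace(J†), where J† is the Moore-Penrose pseudoinverse of J. -/

import Mathlib

open Matrix

/-- The four Penrose conditions characterizing the Moore-Penrose pseudoinverse
(over ℝ, conjugate transpose = transpose). -/
def IsMoorePenrose {n : ℕ} (A B : Matrix (Fin n) (Fin n) ℝ) : Prop :=
  A * B * A = A ∧ B * A * B = B ∧ (A * B)ᵀ = A * B ∧ (B * A)ᵀ = B * A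

/-- `eigDesc hA i` is the `i`-th largest eigenvalue (counted with multiplicity)
of the symmetric real matrix `A`. -/
noncomputable def eigDesc {n : ℕ} {A : Matrix (Fin n) (Fin n) ℝ}
    (hA : A.IsHermitian) (i : Fin n) : ℝ :=
  hA.eigenvalues (Tuple.sort hA.eigenvalues i.rev)

/-!
Write `M = Vᵀ J V` and `W = V M⁻¹ Vᵀ`. Since `J V` has rank at least `rank M = r = rank J`,
its range is that of `J`; as `J W` fixes `J V`, it fixes all of `J`, i.e. `J W J = J`.
With the orthogonal projection `P = J J†` this gives
`trace J† = trace (J† J W J J†) = trace (P W P)`, which is at most `trace W` because `W` is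
positive semidefinite.
-/

namespace IsMoorePenrose

variable {n : ℕ} {A B C : Matrix (Fin n) (Fin n) ℝ}

theorem unique (hB : IsMoorePenrose A B) (hC : IsMoorePenrose A C) : B = C := by
  obtain ⟨hABA, hBAB, hAB, hBA⟩ := hB
  obtain ⟨hACA, hCAC, hAC, hCA⟩ := hC
  have hB : B = B * A * C :=
    calc B = B * (A * B)ᵀ := by rw [hAB, ← Matrix.mul_assoc, hBAB]
      _ = B * (A * C * A * B)ᵀ := by rw [hACA]
      _ = B * ((A * B)ᵀ * (A * C)ᵀ) := by simp only [transpose_mul, Matrix.mul_assoc]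
      _ = B * A * C := by rw [hAB, hAC]; simp only [← Matrix.mul_assoc]; rw [hBAB]
  have hC : C = B * A * C :=
    calc C = (C * A)ᵀ * C := by rw [hCA, hCAC]
      _ = (C * (A * B * A))ᵀ * C := by rw [hABA]
      _ = (B * A)ᵀ * (C * A)ᵀ * C := by simp only [transpose_mul, Matrix.mul_assoc]
      _ = B * A * C := by rw [hBA, hCA, Matrix.mul_assoc (B * A), hCAC]
  rw [hB, ← hC]

theorem transpose_eq_self (hA : Aᵀ = A) (hB : IsMoorePenrose A B) : Bᵀ = B := by
  obtain ⟨hABA, hBAB, hAB, hBA⟩ := hB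
  refine unique ⟨?_, ?_, ?_, ?_⟩ ⟨hABA, hBAB, hAB, hBA⟩
  · simpa only [transpose_mul, hA, Matrix.mul_assoc] using congrArg transpose hABA
  · simpa only [transpose_mul, hA, Matrix.mul_assoc] using congrArg transpose hBAB
  · simpa only [transpose_mul, transpose_transpose, hA] using hBA.symm
  · simpa only [transpose_mul, transpose_transpose, hA] using hAB.symm

end IsMoorePenrose

namespace Matrix

variable {K : Type*} [Field K] {m k l : Type*} [Fintype k] [Fintype l]

theorem mul_eq_self_of_range_le [Fintype m] {P : Matrix m m K} {C : Matrix m k K}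
    {D : Matrix m l K} (hPC : P * C = C)
    (hDC : LinearMap.range D.mulVecLin ≤ LinearMap.range C.mulVecLin) :
    P * D = D := by
  classical
  refine ext_of_mulVec_single fun j => ?_
  obtain ⟨y, hy⟩ := hDC ⟨Pi.single j 1, rfl⟩
  change C *ᵥ y = D *ᵥ Pi.single j 1 at hy
  rw [← mulVec_mulVec, ← hy, mulVec_mulVec, hPC]

theorem range_mulVecLin_mul_eq_of_rank_le {A : Matrix m k K} {B : Matrix k l K}
    (h : A.rank ≤ (A * B).rank) :
    LinearMap.range (A * B).mulVecLin = LinearMap.range A.mulVecLin := by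
  refine Submodule.eq_of_le_of_finrank_le ?_ h
  rw [mulVecLin_mul]
  exact LinearMap.range_comp_le_range _ _

theorem mul_mul_nonsing_inv_mul_mul_eq_self [Fintype m] [DecidableEq k] {A : Matrix m m K}
    {U : Matrix m k K} {W : Matrix k m K} (hdet : IsUnit (W * A * U).det)
    (hrank : A.rank ≤ Fintype.card k) :
    A * (U * (W * A * U)⁻¹ * W) * A = A := by
  have hAU : A * U * (W * A * U)⁻¹ * W * (A * U) = A * U := by
    rw [Matrix.mul_assoc _ W, ← Matrix.mul_assoc W, Matrix.mul_assoc _ _ (W * A * U),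
      nonsing_inv_mul _ hdet, Matrix.mul_one]
  have hrange : LinearMap.range (A * U).mulVecLin = LinearMap.range A.mulVecLin := by
    refine range_mulVecLin_mul_eq_of_rank_le (hrank.trans ?_)
    rw [← rank_of_isUnit _ ((isUnit_iff_isUnit_det _).mpr hdet), Matrix.mul_assoc]
    exact rank_mul_le_right _ _
  simpa only [Matrix.mul_assoc] using mul_eq_self_of_range_le hAU hrange.ge

theorem trace_mul_mul_le_of_isIdempotentElem [Fintype m] [DecidableEq m]
    {W P : Matrix m m ℝ} (hW : W.PosSemidef) (hP : IsIdempotentElem P) (hPt : Pᵀ = P) :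
    (P * W * P).trace ≤ W.trace := by
  have hQ : IsIdempotentElem (1 - P) := hP.one_sub
  have hcompl : 0 ≤ ((1 - P)ᴴ * W * (1 - P)).trace :=
    (hW.conjTranspose_mul_mul_same (1 - P)).trace_nonneg
  have hcycle : ∀ Q : Matrix m m ℝ, IsIdempotentElem Q → (Q * W * Q).trace = (W * Q).trace :=
    fun Q hQ => by rw [trace_mul_cycle, hQ.eq, trace_mul_comm]
  rw [conjTranspose_eq_transpose_of_trivial, transpose_sub, transpose_one, hPt, hcycle _ hQ,
    Matrix.mul_sub, Matrix.mul_one, trace_sub] at hcompl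
  rw [hcycle _ hP]
  linarith

end Matrix

theorem stmt7_general {n r : ℕ}
    (J : Matrix (Fin n) (Fin n) ℝ) (hJ : J.PosSemidef) (hrank : J.rank = r)
    (V : Matrix (Fin n) (Fin r) ℝ)
    (hdet : IsUnit (Vᵀ * J * V).det)
    (K : Matrix (Fin n) (Fin n) ℝ) (hKmp : IsMoorePenrose J K) :
    K.trace ≤ (V * (Vᵀ * J * V)⁻¹ * Vᵀ).trace := by
  set W := V * (Vᵀ * J * V)⁻¹ * Vᵀ
  have hJt : Jᵀ = J := hJ.1
  have hKt : Kᵀ = K := hKmp.transpose_eq_self hJt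
  obtain ⟨hJKJ, hKJK, hJK, hKJ⟩ := hKmp
  have hcomm : K * J = J * K := by rw [← hKJ, transpose_mul, hJt, hKt]
  have hJWJ : J * W * J = J :=
    mul_mul_nonsing_inv_mul_mul_eq_self hdet (by rw [hrank, Fintype.card_fin])
  have hW : W.PosSemidef := by
    have hM := hJ.conjTranspose_mul_mul_same V
    rw [conjTranspose_eq_transpose_of_trivial] at hM
    simpa only [conjTranspose_eq_transpose_of_trivial] using hM.inv.mul_mul_conjTranspose_same V
  calc K.trace = (K * (J * W * J) * K).trace := by rw [hJWJ, hKJK]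
    _ = (J * K * W * (J * K)).trace := by simp only [← Matrix.mul_assoc]; rw [hcomm]
    _ ≤ W.trace := trace_mul_mul_le_of_isIdempotentElem hW
        (by rw [IsIdempotentElem, ← Matrix.mul_assoc, hJKJ]) hJK

theorem stmt7 {n r : ℕ}
    (J : Matrix (Fin n) (Fin n) ℝ) (hJ : J.PosSemidef) (hrank : J.rank = r)
    (V : Matrix (Fin n) (Fin r) ℝ) (hV : Vᵀ * V = 1)
    (hdet : IsUnit (Vᵀ * J * V).det)
    (K : Matrix (Fin n) (Fin n) ℝ) (hKmp : IsMoorePenrose J K) :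
    K.trace ≤ (V * (Vᵀ * J * V)⁻¹ * Vᵀ).trace :=
  stmt7_general J hJ hrank V hdet K hKmp
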